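/- One has the inclusion NN_Q~ ⊆ 2·(PSD_Q~ − PSD_Q~), where PSD_Q~ − PSD_Q~ = {a − b : a, b ∈ PSD_Q~} is the difference body of the section PSD_Q~. -/

import Mathlib

open MeasureTheory Finset

noncomputable section

/-- The space `Q` of even quartics, represented by symmetric coefficient matrices
`a : Fin n → Fin n → ℝ` (the quartic being `∑ i j, a i j * x i ^ 2 * x j ^ 2`). -/
def symSub (n : ℕ) : Submodule ℝ (Fin n → Fin n → ℝ) where
  carrier := {a | ∀ i j, a i j = a j i}
  add_mem' := by
    intro a b ha hb i j
    simp only [Pi.add_apply, ha i j, hb i j]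
  zero_mem' := by intro i j; rfl
  smul_mem' := by
    intro c a ha i j
    simp only [Pi.smul_apply, smul_eq_mul, ha i j]

/-- The even quartic form corresponding to a symmetric coefficient matrix. -/
def qfun {n : ℕ} (a : symSub n) (x : EuclideanSpace ℝ (Fin n)) : ℝ :=
  ∑ i, ∑ j, a.1 i j * (x i)^2 * (x j)^2

/-- The element of `Q` corresponding to `r(x) = (x_1^2 + ... + x_n^2)^2`. -/
def rQ (n : ℕ) : symSub n := ⟨fun _ _ => 1, fun _ _ => rfl⟩

/-- The section `K~ = {f ∈ M : f + r ∈ K}` of a cone `K ⊆ Q`. -/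
def sect {n : ℕ} (σ : Measure (EuclideanSpace ℝ (Fin n))) (K : Set (symSub n)) :
    Set (symSub n) :=
  {a | (∫ x, qfun a x ∂σ) = 0 ∧ a + rQ n ∈ K}

/-- The volume radius of a subset of `M`, computed through a linear isometry `ψ`
of `ℝ^(dim M)` (with Lebesgue measure) onto `M`. -/
def vrad {n d : ℕ} (ψ : EuclideanSpace ℝ (Fin d) →ₗ[ℝ] symSub n)
    (C : Set (symSub n)) : ℝ :=
  ((volume (⇑ψ ⁻¹' C)).toReal /
    (volume (Metric.closedBall (0 : EuclideanSpace ℝ (Fin d)) 1)).toReal) ^ ((1:ℝ)/(d:ℝ))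

/-- `NN_Q`: even quartics with nonnegative coefficients. -/
def NNQ (n : ℕ) : Set (symSub n) :=
  {a | ∀ i j, 0 ≤ a.1 i j}

/-- `PSD_Q`: sums of squares of quadratic forms in `x_1^2, …, x_n^2`. -/
def PSDQ (n : ℕ) : Set (symSub n) :=
  {a | ∃ (k : ℕ) (c : Fin k → Fin n → ℝ),
    ∀ x : EuclideanSpace ℝ (Fin n), qfun a x = ∑ i, (∑ j, c i j * (x j)^2)^2}

/-!
Put `C = h + r`: its coefficients are nonnegative and `∫ C dσ = 1`. With `D` the diagonal matrix of
the row sums of `C`, the quartics `P = (D + C)/4 = ∑ C_kl (x_k² + x_l²)²/8` and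
`N = (D - C)/4 = ∑ C_kl (x_k² - x_l²)²/8` are sums of squares with `P - N = C/2`. Invariance of
`σ` under the rotation by `π/4` in the `(x_k, x_l)`-plane gives `∫ (x_k² + x_l²)² ≤ 8 ∫ x_k² x_l²`,
hence `∫ P ≤ ∫ C = 1` and `∫ N = ∫ P - 1/2 ≤ 1`. So `a = P + (1 - ∫ P) r - r` and
`b = N + (1 - ∫ N) r - r` lie in `PSD_Q~`, and `2 (a - b) = C - r = h`.
-/

open Metric Real

section EvenQuartics

variable {n : ℕ}

lemma symSub_symm (C : symSub n) (i j : Fin n) : C.1 i j = C.1 j i := C.2 i j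

@[simp] lemma qfun_add (a b : symSub n) (x : EuclideanSpace ℝ (Fin n)) :
    qfun (a + b) x = qfun a x + qfun b x := by
  simp only [qfun, Submodule.coe_add, Pi.add_apply, add_mul, sum_add_distrib]

@[simp] lemma qfun_smul (t : ℝ) (a : symSub n) (x : EuclideanSpace ℝ (Fin n)) :
    qfun (t • a) x = t * qfun a x := by
  simp only [qfun, Submodule.coe_smul, Pi.smul_apply, smul_eq_mul, mul_sum, mul_assoc]

lemma qfun_rQ (x : EuclideanSpace ℝ (Fin n)) : qfun (rQ n) x = (∑ j, x j ^ 2) ^ 2 := by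
  simp [qfun, rQ, sq (∑ j, x j ^ 2), sum_mul_sum]

@[fun_prop] lemma continuous_qfun (a : symSub n) : Continuous (qfun a) := by
  unfold qfun; fun_prop

lemma mem_PSDQ_of_eq_sum_sq {ι : Type*} [Fintype ι] {a : symSub n} (c : ι → Fin n → ℝ)
    (h : ∀ x, qfun a x = ∑ i, (∑ j, c i j * x j ^ 2) ^ 2) : a ∈ PSDQ n :=
  ⟨Fintype.card ι, fun i => c ((Fintype.equivFin ι).symm i), fun x => by
    rw [h x, ← (Fintype.equivFin ι).symm.sum_comp]⟩

lemma add_mem_PSDQ {a b : symSub n} (ha : a ∈ PSDQ n) (hb : b ∈ PSDQ n) : a + b ∈ PSDQ n := by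
  obtain ⟨k, c, hc⟩ := ha
  obtain ⟨l, d, hd⟩ := hb
  exact mem_PSDQ_of_eq_sum_sq (Sum.elim c d) fun x => by simp [hc, hd, Fintype.sum_sum_type]

lemma smul_mem_PSDQ {t : ℝ} (ht : 0 ≤ t) {a : symSub n} (ha : a ∈ PSDQ n) : t • a ∈ PSDQ n := by
  obtain ⟨k, c, hc⟩ := ha
  refine ⟨k, fun i j => √t * c i j, fun x => ?_⟩
  simp only [qfun_smul, hc, mul_assoc, ← mul_sum, mul_pow, sq_sqrt ht]

lemma rQ_mem_PSDQ : rQ n ∈ PSDQ n :=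
  ⟨1, fun _ _ => 1, fun x => by simp [qfun_rQ]⟩

def degreeQ (C : symSub n) : symSub n :=
  ⟨fun i j => if i = j then ∑ l, C.1 i l else 0, fun i j => by
    rcases eq_or_ne i j with rfl | h
    · rfl
    · simp [h, h.symm]⟩

lemma qfun_degreeQ (C : symSub n) (x : EuclideanSpace ℝ (Fin n)) :
    qfun (degreeQ C) x = ∑ k, (∑ l, C.1 k l) * (x k ^ 2) ^ 2 := by
  simp [qfun, degreeQ, ite_mul, sq (x _ ^ 2), mul_assoc]

lemma qfun_degreeQ_add_smul (C : symSub n) {ε : ℝ} (hε : ε ^ 2 = 1)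
    (x : EuclideanSpace ℝ (Fin n)) :
    qfun (degreeQ C + ε • C) x = ∑ k, ∑ l, C.1 k l / 2 * (x k ^ 2 + ε * x l ^ 2) ^ 2 := by
  have expand : ∀ k l, C.1 k l / 2 * (x k ^ 2 + ε * x l ^ 2) ^ 2 =
      C.1 k l / 2 * (x k ^ 2) ^ 2 + ε * (C.1 k l * x k ^ 2 * x l ^ 2) +
        C.1 k l / 2 * (x l ^ 2) ^ 2 :=
    fun k l => by linear_combination C.1 k l / 2 * (x l ^ 2) ^ 2 * hε
  have swap : ∑ k, ∑ l, C.1 k l / 2 * (x l ^ 2) ^ 2 = ∑ k, ∑ l, C.1 k l / 2 * (x k ^ 2) ^ 2 := by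
    rw [sum_comm]
    simp only [symSub_symm C]
  have halves : ∑ k, (∑ l, C.1 k l) * (x k ^ 2) ^ 2 =
      ∑ k, ∑ l, C.1 k l / 2 * (x k ^ 2) ^ 2 + ∑ k, ∑ l, C.1 k l / 2 * (x k ^ 2) ^ 2 := by
    simp only [sum_mul, ← sum_add_distrib]
    exact sum_congr rfl fun k _ => sum_congr rfl fun l _ => by ring
  rw [qfun_add, qfun_smul, qfun_degreeQ, halves]
  simp only [expand, sum_add_distrib, swap, ← mul_sum, qfun]
  ring

lemma degreeQ_add_smul_mem_PSDQ {C : symSub n} (hC : ∀ i j, 0 ≤ C.1 i j) {ε : ℝ}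
    (hε : ε ^ 2 = 1) : degreeQ C + ε • C ∈ PSDQ n := by
  refine mem_PSDQ_of_eq_sum_sq (ι := Fin n × Fin n) (fun p j => √(C.1 p.1 p.2 / 2) *
    ((Pi.single p.1 1 : Fin n → ℝ) j + ε * (Pi.single p.2 1 : Fin n → ℝ) j)) fun x => ?_
  rw [qfun_degreeQ_add_smul C hε, Fintype.sum_prod_type]
  refine sum_congr rfl fun k _ => sum_congr rfl fun l _ => ?_
  simp only [mul_assoc, ← mul_sum, add_mul, sum_add_distrib, Pi.single_apply, ite_mul, one_mul,
    zero_mul, mul_ite, mul_zero, sum_ite_eq', mem_univ, if_true, mul_pow,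
    sq_sqrt (div_nonneg (hC k l) zero_le_two)]

def planeRotationLinear (k l : Fin n) (θ : ℝ) :
    EuclideanSpace ℝ (Fin n) →ₗ[ℝ] EuclideanSpace ℝ (Fin n) where
  toFun x := WithLp.toLp 2 fun m =>
    if m = k then cos θ * x k - sin θ * x l else if m = l then sin θ * x k + cos θ * x l else x m
  map_add' x y := by
    ext m
    simp only [PiLp.add_apply]
    split_ifs <;> ring
  map_smul' c x := by
    ext m
    simp only [PiLp.smul_apply, smul_eq_mul, RingHom.id_apply]
    split_ifs <;> ring

lemma planeRotationLinear_apply_left (k l : Fin n) (θ : ℝ) (x : EuclideanSpace ℝ (Fin n)) :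
    planeRotationLinear k l θ x k = cos θ * x k - sin θ * x l := by
  simp [planeRotationLinear]

lemma planeRotationLinear_apply_right {k l : Fin n} (hkl : k ≠ l) (θ : ℝ)
    (x : EuclideanSpace ℝ (Fin n)) :
    planeRotationLinear k l θ x l = sin θ * x k + cos θ * x l := by
  simp [planeRotationLinear, hkl.symm]

lemma planeRotationLinear_apply_of_ne {k l m : Fin n} (hk : m ≠ k) (hl : m ≠ l) (θ : ℝ)
    (x : EuclideanSpace ℝ (Fin n)) : planeRotationLinear k l θ x m = x m := by
  simp [planeRotationLinear, hk, hl]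

lemma norm_planeRotationLinear {k l : Fin n} (hkl : k ≠ l) (θ : ℝ) (x : EuclideanSpace ℝ (Fin n)) :
    ‖planeRotationLinear k l θ x‖ = ‖x‖ := by
  have hl : l ∈ univ.erase k := mem_erase.2 ⟨hkl.symm, mem_univ l⟩
  rw [← sq_eq_sq₀ (norm_nonneg _) (norm_nonneg _), EuclideanSpace.real_norm_sq_eq,
    EuclideanSpace.real_norm_sq_eq, ← add_sum_erase _ _ (mem_univ k), ← add_sum_erase _ _ hl,
    ← add_sum_erase _ _ (mem_univ k), ← add_sum_erase _ _ hl,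
    planeRotationLinear_apply_left, planeRotationLinear_apply_right hkl]
  have rest : ∑ m ∈ (univ.erase k).erase l, planeRotationLinear k l θ x m ^ 2 =
      ∑ m ∈ (univ.erase k).erase l, x m ^ 2 :=
    sum_congr rfl fun m hm => by
      rw [planeRotationLinear_apply_of_ne (ne_of_mem_erase (mem_of_mem_erase hm))
        (ne_of_mem_erase hm)]
  rw [rest]
  linear_combination (x k ^ 2 + x l ^ 2) * sin_sq_add_cos_sq θ

def planeRotation {k l : Fin n} (hkl : k ≠ l) (θ : ℝ) :
    EuclideanSpace ℝ (Fin n) ≃ₗᵢ[ℝ] EuclideanSpace ℝ (Fin n) :=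
  LinearIsometry.toLinearIsometryEquiv
    ⟨planeRotationLinear k l θ, norm_planeRotationLinear hkl θ⟩ rfl

lemma planeRotation_pi_div_four_sq_mul_sq {k l : Fin n} (hkl : k ≠ l)
    (x : EuclideanSpace ℝ (Fin n)) :
    planeRotation hkl (π / 4) x k ^ 2 * planeRotation hkl (π / 4) x l ^ 2 =
      (x k ^ 2 - x l ^ 2) ^ 2 / 4 := by
  have h2 : √2 ^ 2 = 2 := sq_sqrt zero_le_two
  simp only [planeRotation, LinearIsometry.coe_toLinearIsometryEquiv, LinearIsometry.coe_mk,
    planeRotationLinear_apply_left, planeRotationLinear_apply_right hkl, cos_pi_div_four,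
    sin_pi_div_four]
  linear_combination (x k ^ 2 - x l ^ 2) ^ 2 * (√2 ^ 2 + 2) / 16 * h2

lemma Continuous.integrable_of_ae_mem_isCompact {X E : Type*} [TopologicalSpace X] [T2Space X]
    [MeasurableSpace X] [OpensMeasurableSpace X] [NormedAddCommGroup E] {μ : Measure X}
    [IsFiniteMeasure μ] {K : Set X} (hK : IsCompact K) (hμ : ∀ᵐ x ∂μ, x ∈ K) {f : X → E}
    (hf : Continuous f) : Integrable f μ := by
  rw [← Measure.restrict_eq_self_of_ae_mem hμ]
  exact hf.continuousOn.integrableOn_compact hK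

section Moments

variable {σ : Measure (EuclideanSpace ℝ (Fin n))}

lemma integral_sq_mul_sq_eq_of_map_eq (hσinv : ∀ O : EuclideanSpace ℝ (Fin n) ≃ₗᵢ[ℝ]
      EuclideanSpace ℝ (Fin n), Measure.map O σ = σ) {k l : Fin n} (hkl : k ≠ l) :
    ∫ x, x k ^ 2 * x l ^ 2 ∂σ = ∫ x, (x k ^ 2 - x l ^ 2) ^ 2 / 4 ∂σ := by
  set O := planeRotation hkl (π / 4)
  calc ∫ x, x k ^ 2 * x l ^ 2 ∂σ = ∫ x, x k ^ 2 * x l ^ 2 ∂(σ.map O) := by rw [hσinv]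
    _ = ∫ x, O x k ^ 2 * O x l ^ 2 ∂σ :=
      integral_map O.continuous.aemeasurable (by fun_prop : Continuous _).aestronglyMeasurable
    _ = _ := by simp only [O, planeRotation_pi_div_four_sq_mul_sq]

variable [IsFiniteMeasure σ]

lemma integral_sum_sum (hσ : ∀ᵐ x ∂σ, x ∈ sphere (0 : EuclideanSpace ℝ (Fin n)) 1)
    {f : Fin n → Fin n → EuclideanSpace ℝ (Fin n) → ℝ} (hf : ∀ k l, Continuous (f k l)) :
    ∫ x, ∑ k, ∑ l, f k l x ∂σ = ∑ k, ∑ l, ∫ x, f k l x ∂σ := by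
  have hint k l := (hf k l).integrable_of_ae_mem_isCompact (isCompact_sphere 0 1) hσ
  rw [integral_finsetSum _ fun k _ => integrable_finsetSum _ fun l _ => hint k l]
  exact sum_congr rfl fun k _ => integral_finsetSum _ fun l _ => hint k l

def integralQ (σ : Measure (EuclideanSpace ℝ (Fin n))) [IsFiniteMeasure σ]
    (hσ : ∀ᵐ x ∂σ, x ∈ sphere (0 : EuclideanSpace ℝ (Fin n)) 1) : symSub n →ₗ[ℝ] ℝ where
  toFun a := ∫ x, qfun a x ∂σ
  map_add' a b := by
    simp only [qfun_add]
    exact integral_add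
      ((continuous_qfun a).integrable_of_ae_mem_isCompact (isCompact_sphere 0 1) hσ)
      ((continuous_qfun b).integrable_of_ae_mem_isCompact (isCompact_sphere 0 1) hσ)
  map_smul' t a := by
    simp only [qfun_smul, RingHom.id_apply, smul_eq_mul]
    exact integral_const_mul t _

lemma integralQ_apply (hσ : ∀ᵐ x ∂σ, x ∈ sphere (0 : EuclideanSpace ℝ (Fin n)) 1) (a : symSub n) :
    integralQ σ hσ a = ∫ x, qfun a x ∂σ := rfl

lemma integralQ_rQ [IsProbabilityMeasure σ]
    (hσ : ∀ᵐ x ∂σ, x ∈ sphere (0 : EuclideanSpace ℝ (Fin n)) 1) : integralQ σ hσ (rQ n) = 1 := by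
  have hr : ∀ᵐ x ∂σ, qfun (rQ n) x = 1 := hσ.mono fun x hx => by
    rw [qfun_rQ, ← EuclideanSpace.real_norm_sq_eq, mem_sphere_zero_iff_norm.1 hx, one_pow, one_pow]
  simp [integralQ_apply, integral_congr_ae hr]

lemma integral_sq_add_sq_sq_le (hσ : ∀ᵐ x ∂σ, x ∈ sphere (0 : EuclideanSpace ℝ (Fin n)) 1)
    (hσinv : ∀ O : EuclideanSpace ℝ (Fin n) ≃ₗᵢ[ℝ] EuclideanSpace ℝ (Fin n),
      Measure.map O σ = σ) (k l : Fin n) :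
    ∫ x, (x k ^ 2 + x l ^ 2) ^ 2 ∂σ ≤ 8 * ∫ x, x k ^ 2 * x l ^ 2 ∂σ := by
  have hint {f : EuclideanSpace ℝ (Fin n) → ℝ} (hf : Continuous f) : Integrable f σ :=
    hf.integrable_of_ae_mem_isCompact (isCompact_sphere 0 1) hσ
  rw [← integral_const_mul]
  rcases eq_or_ne k l with rfl | hkl
  · exact integral_mono (hint (by fun_prop)) (hint (by fun_prop)) fun x => by
      nlinarith [sq_nonneg (x k ^ 2)]
  · have hsplit : ∀ x : EuclideanSpace ℝ (Fin n), (x k ^ 2 + x l ^ 2) ^ 2 =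
        4 * ((x k ^ 2 - x l ^ 2) ^ 2 / 4) + 4 * (x k ^ 2 * x l ^ 2) := fun x => by ring
    simp only [hsplit]
    rw [integral_add (hint (by fun_prop)) (hint (by fun_prop)), integral_const_mul,
      integral_const_mul, integral_const_mul, ← integral_sq_mul_sq_eq_of_map_eq hσinv hkl]
    linarith

lemma integralQ_degreeQ_add_le (hσ : ∀ᵐ x ∂σ, x ∈ sphere (0 : EuclideanSpace ℝ (Fin n)) 1)
    (hσinv : ∀ O : EuclideanSpace ℝ (Fin n) ≃ₗᵢ[ℝ] EuclideanSpace ℝ (Fin n),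
      Measure.map O σ = σ) {C : symSub n} (hC : ∀ i j, 0 ≤ C.1 i j) :
    integralQ σ hσ (degreeQ C + C) ≤ 4 * integralQ σ hσ C := by
  have hqC : integralQ σ hσ (degreeQ C + C) =
      ∑ k, ∑ l, C.1 k l / 2 * ∫ x, (x k ^ 2 + x l ^ 2) ^ 2 ∂σ := by
    have hq x : qfun (degreeQ C + C) x = ∑ k, ∑ l, C.1 k l / 2 * (x k ^ 2 + x l ^ 2) ^ 2 := by
      simpa using qfun_degreeQ_add_smul C (one_pow 2) x
    simp only [integralQ_apply, hq]
    rw [integral_sum_sum hσ fun k l => by fun_prop]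
    simp only [integral_const_mul]
  have hC' : integralQ σ hσ C = ∑ k, ∑ l, C.1 k l * ∫ x, x k ^ 2 * x l ^ 2 ∂σ := by
    simp only [integralQ_apply, qfun, mul_assoc]
    rw [integral_sum_sum hσ fun k l => by fun_prop]
    simp only [integral_const_mul]
  rw [hqC, hC', mul_sum]
  refine sum_le_sum fun k _ => ?_
  rw [mul_sum]
  refine sum_le_sum fun l _ => ?_
  nlinarith [integral_sq_add_sq_sq_le hσ hσinv k l, hC k l]

end Moments

lemma add_smul_rQ_sub_rQ_mem_sect {σ : Measure (EuclideanSpace ℝ (Fin n))} [IsProbabilityMeasure σ]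
    (hσ : ∀ᵐ x ∂σ, x ∈ sphere (0 : EuclideanSpace ℝ (Fin n)) 1) {S : symSub n} (hS : S ∈ PSDQ n)
    (hSσ : integralQ σ hσ S ≤ 1) :
    S + (1 - integralQ σ hσ S) • rQ n - rQ n ∈ sect σ (PSDQ n) := by
  refine ⟨?_, ?_⟩
  · rw [← integralQ_apply hσ, map_sub, map_add, map_smul, integralQ_rQ, smul_eq_mul]
    ring
  · rw [sub_add_cancel]
    exact add_mem_PSDQ hS (smul_mem_PSDQ (sub_nonneg.2 hSσ) rQ_mem_PSDQ)

end EvenQuartics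

theorem stmt14_general (n : ℕ)
    (σ : Measure (EuclideanSpace ℝ (Fin n)))
    (hσprob : IsProbabilityMeasure σ)
    (hσsphere : σ (Metric.sphere (0 : EuclideanSpace ℝ (Fin n)) 1) = 1)
    (hσinv : ∀ O : EuclideanSpace ℝ (Fin n) ≃ₗᵢ[ℝ] EuclideanSpace ℝ (Fin n),
      Measure.map (⇑O) σ = σ) :
    sect σ (NNQ n) ⊆
      {h : symSub n | ∃ a ∈ sect σ (PSDQ n), ∃ b ∈ sect σ (PSDQ n),
        h = (2:ℝ) • (a - b)} := by
  rintro h ⟨hh, hC⟩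
  have hσ : ∀ᵐ x ∂σ, x ∈ sphere (0 : EuclideanSpace ℝ (Fin n)) 1 :=
    (mem_ae_iff_prob_eq_one isClosed_sphere.measurableSet).2 hσsphere
  set L := integralQ σ hσ
  set C := h + rQ n
  have hLC : L C = 1 := by rw [map_add, integralQ_rQ, integralQ_apply, hh, zero_add]
  set P := (1 / 4 : ℝ) • (degreeQ C + C)
  set N := (1 / 4 : ℝ) • (degreeQ C + (-1 : ℝ) • C)
  have hLN : L N = L P - 1 / 2 := by
    simp only [P, N, map_smul, map_add, hLC, smul_eq_mul]
    ring
  have hLP : L P ≤ 1 := by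
    simp only [P, map_smul, smul_eq_mul]
    linarith [integralQ_degreeQ_add_le hσ hσinv hC]
  have hP : P ∈ PSDQ n :=
    smul_mem_PSDQ (by norm_num) (by simpa using degreeQ_add_smul_mem_PSDQ hC (one_pow 2))
  have hN : N ∈ PSDQ n := smul_mem_PSDQ (by norm_num) (degreeQ_add_smul_mem_PSDQ hC (by norm_num))
  refine ⟨_, add_smul_rQ_sub_rQ_mem_sect hσ hP hLP, _,
    add_smul_rQ_sub_rQ_mem_sect hσ hN (by linarith), ?_⟩
  rw [hLN]
  simp only [P, N, C]
  module

/-- `NN_Q~ ⊆ 2·(PSD_Q~ − PSD_Q~)`. -/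
theorem stmt14 (n : ℕ) (hn : 1 ≤ n)
    (σ : Measure (EuclideanSpace ℝ (Fin n)))
    (hσprob : IsProbabilityMeasure σ)
    (hσsphere : σ (Metric.sphere (0 : EuclideanSpace ℝ (Fin n)) 1) = 1)
    (hσinv : ∀ O : EuclideanSpace ℝ (Fin n) ≃ₗᵢ[ℝ] EuclideanSpace ℝ (Fin n),
      Measure.map (⇑O) σ = σ) :
    sect σ (NNQ n) ⊆
      {h : symSub n | ∃ a ∈ sect σ (PSDQ n), ∃ b ∈ sect σ (PSDQ n),
        h = (2:ℝ) • (a - b)} :=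
  stmt14_general n σ hσprob hσsphere hσinv
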